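/- arXiv:1910.09192 — 2 statements merged into one kernel-verified Lean document; each statement's English description precedes it below -/
import Mathlib

section
/- The integral over the real line of [(1 - αz - βz³)² + 1]·φ(z)·Φ(λz) dz equals 1 + 3αβ - αbδ - βbδ(3+2λ²)/(1+λ²) + α²/2 + 15β²/2, where φ and Φ are the standard normal pdf and cdf, b = √(2/π), and δ = λ/√(1+λ²). -/
open Real MeasureTheory Filter

/-- standard normal pdf -/
noncomputable def phi (z : ℝ) : ℝ := (Real.sqrt (2 * Real.pi))⁻¹ * Real.exp (-z ^ 2 / 2)

/-- standard normal cdf -/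
noncomputable def Phi (z : ℝ) : ℝ := ∫ t in Set.Iic z, phi t

noncomputable def bconst : ℝ := Real.sqrt (2 / Real.pi)

noncomputable def del (l : ℝ) : ℝ := l / Real.sqrt (1 + l ^ 2)

/-- GABSN normalizing constant -/
noncomputable def C (a β l : ℝ) : ℝ :=
  1 + 3 * a * β - a * bconst * del l - β * bconst * del l * (3 + 2 * l ^ 2) / (1 + l ^ 2)
    + a ^ 2 / 2 + 15 * β ^ 2 / 2

/-- GABSN density -/
noncomputable def f (a β l z : ℝ) : ℝ :=
  (((1 - a * z - β * z ^ 3) ^ 2 + 1) * phi z * Phi (l * z)) / C a β l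

/-!
Expanding the square turns the integral into a combination of the skew moments
`∫ zᵏ φ(z) Φ(λz)`, `k ≤ 6`. For even `k`, reflecting `z ↦ -z` and `Φ(λz) + Φ(-λz) = 1` show
that the moment is half the normal moment `E Zᵏ` (`1, 1, 3, 15` for `k = 0, 2, 4, 6`). For odd `k`,
Stein's identity `∫ z g φ = ∫ g' φ` moves the derivative onto `Φ(λz)`, which produces
`φ(z) φ(λz) = φ(√(1 + λ²) z) / √(2π)`; its moments follow from those of `φ` by rescaling.
-/

open ProbabilityTheory

lemma phi_eq_gaussianPDFReal : phi = gaussianPDFReal 0 1 := by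
  ext z; simp [phi, gaussianPDFReal]

lemma phi_pos (z : ℝ) : 0 < phi z :=
  phi_eq_gaussianPDFReal ▸ gaussianPDFReal_pos 0 1 z one_ne_zero

lemma phi_le_one (z : ℝ) : phi z ≤ 1 := by
  have h2π : 1 ≤ √(2 * π) := Real.one_le_sqrt.2 (by linarith [pi_gt_three])
  calc phi z ≤ 1 * 1 := by
        unfold phi
        gcongr
        · exact inv_le_one_of_one_le₀ h2π
        · exact exp_le_one_iff.2 (by nlinarith [sq_nonneg z])
    _ = 1 := one_mul 1

lemma phi_neg (z : ℝ) : phi (-z) = phi z := by simp [phi]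

lemma continuous_phi : Continuous phi := by unfold phi; fun_prop

lemma hasDerivAt_phi (x : ℝ) : HasDerivAt phi (-x * phi x) x := by
  have hq : HasDerivAt (fun z : ℝ => -z ^ 2 / 2) (-x) x :=
    ((hasDerivAt_pow 2 x).fun_neg.div_const 2).congr_deriv (by push_cast; ring)
  exact (hq.exp.const_mul (√(2 * π))⁻¹ : HasDerivAt phi _ x).congr_deriv (by unfold phi; ring)

lemma integrable_phi : Integrable phi :=
  phi_eq_gaussianPDFReal ▸ integrable_gaussianPDFReal 0 1

lemma integral_phi : ∫ z, phi z = 1 :=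
  phi_eq_gaussianPDFReal ▸ integral_gaussianPDFReal_eq_one 0 one_ne_zero

lemma integrable_pow_mul_phi (n : ℕ) : Integrable fun z : ℝ => z ^ n * phi z := by
  have h := (integrable_rpow_mul_exp_neg_mul_sq (b := 1 / 2) (by norm_num)
    (s := n) (by linarith [n.cast_nonneg (α := ℝ)])).const_mul (√(2 * π))⁻¹
  refine h.congr (ae_of_all _ fun z => ?_)
  simp only [phi, rpow_natCast]
  ring_nf

lemma integrable_pow_mul_phi_mul {g : ℝ → ℝ} {c : ℝ} (hg : Continuous g) (hgc : ∀ x, |g x| ≤ c)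
    (n : ℕ) : Integrable fun z : ℝ => z ^ n * phi z * g z :=
  (integrable_pow_mul_phi n).mul_bdd hg.aestronglyMeasurable (ae_of_all _ hgc)

theorem integral_mul_phi_mul_eq_integral_phi_mul_deriv {g g' : ℝ → ℝ}
    (hg : ∀ x, HasDerivAt g (g' x) x) (hxg : Integrable fun x => x * phi x * g x)
    (hg' : Integrable fun x => phi x * g' x) (hgi : Integrable fun x => phi x * g x) :
    ∫ x, x * phi x * g x = ∫ x, phi x * g' x := by
  have hderiv (x : ℝ) : HasDerivAt (fun x => phi x * g x) (phi x * g' x - x * phi x * g x) x :=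
    ((hasDerivAt_phi x).mul (hg x)).congr_deriv (by ring)
  have h0 := integral_eq_zero_of_hasDerivAt_of_integrable hderiv (hg'.sub hxg) hgi
  rw [integral_sub hg' hxg] at h0
  linarith

lemma integral_pow_add_two_mul_phi (n : ℕ) :
    ∫ z, z ^ (n + 2) * phi z = (n + 1) * ∫ z, z ^ n * phi z := by
  have hg (x : ℝ) : HasDerivAt (fun x => x ^ (n + 1)) ((n + 1) * x ^ n) x := by
    simpa using hasDerivAt_pow (n + 1) x
  have h := integral_mul_phi_mul_eq_integral_phi_mul_deriv hg
    ((integrable_pow_mul_phi (n + 2)).congr (ae_of_all _ fun x => by ring))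
    (((integrable_pow_mul_phi n).const_mul (n + 1)).congr (ae_of_all _ fun x => by ring))
    ((integrable_pow_mul_phi (n + 1)).congr (ae_of_all _ fun x => by ring))
  calc ∫ x, x ^ (n + 2) * phi x = ∫ x, x * phi x * x ^ (n + 1) := by congr 1; ext x; ring
    _ = ∫ x, phi x * ((n + 1) * x ^ n) := h
    _ = (n + 1) * ∫ x, x ^ n * phi x := by rw [← integral_const_mul]; congr 1; ext x; ring

lemma integral_pow_two_mul_phi : ∫ z, z ^ 2 * phi z = 1 := by
  simpa [integral_phi] using integral_pow_add_two_mul_phi 0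

lemma integral_pow_four_mul_phi : ∫ z, z ^ 4 * phi z = 3 := by
  rw [integral_pow_add_two_mul_phi 2, integral_pow_two_mul_phi]; norm_num

lemma integral_pow_six_mul_phi : ∫ z, z ^ 6 * phi z = 15 := by
  rw [integral_pow_add_two_mul_phi 4, integral_pow_four_mul_phi]; norm_num

lemma Phi_nonneg (x : ℝ) : 0 ≤ Phi x :=
  setIntegral_nonneg measurableSet_Iic fun z _ => (phi_pos z).le

lemma Phi_le_one (x : ℝ) : Phi x ≤ 1 :=
  integral_phi ▸ setIntegral_le_integral integrable_phi (ae_of_all _ fun z => (phi_pos z).le)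

lemma abs_Phi_le_one (x : ℝ) : |Phi x| ≤ 1 :=
  abs_le.2 ⟨by linarith [Phi_nonneg x], Phi_le_one x⟩

lemma Phi_neg (x : ℝ) : Phi (-x) = 1 - Phi x := by
  have hsplit : Phi x + ∫ z in Set.Ioi x, phi z = 1 :=
    integral_phi ▸ intervalIntegral.integral_Iic_add_Ioi integrable_phi.integrableOn
      integrable_phi.integrableOn
  have hreflect : Phi (-x) = ∫ z in Set.Ioi x, phi z := by
    rw [Phi]
    simpa only [phi_neg, neg_neg] using integral_comp_neg_Iic (-x) phi
  linarith

lemma hasDerivAt_Phi (x : ℝ) : HasDerivAt Phi (phi x) x := by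
  have hPhi : Phi = fun y => Phi 0 + ∫ t in (0 : ℝ)..y, phi t := by
    ext y
    rw [← intervalIntegral.integral_Iic_sub_Iic integrable_phi.integrableOn
      integrable_phi.integrableOn, Phi, Phi]
    ring
  rw [hPhi]
  exact (intervalIntegral.integral_hasDerivAt_right integrable_phi.intervalIntegrable
    (continuous_phi.stronglyMeasurableAtFilter _ _) continuous_phi.continuousAt).const_add _

lemma continuous_Phi : Continuous Phi :=
  continuous_iff_continuousAt.2 fun x => (hasDerivAt_Phi x).continuousAt

lemma integral_mul_phi_mul_Phi_of_even {h : ℝ → ℝ} (heven : ∀ z, h (-z) = h z)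
    (hint : Integrable fun z => h z * phi z) (l : ℝ) :
    ∫ z, h z * phi z * Phi (l * z) = (∫ z, h z * phi z) / 2 := by
  have hint' (l : ℝ) : Integrable fun z => h z * phi z * Phi (l * z) :=
    hint.mul_bdd (continuous_Phi.comp (continuous_const_mul l)).aestronglyMeasurable
      (ae_of_all _ fun _ => abs_Phi_le_one _)
  have hreflect : ∫ z, h z * phi z * Phi (l * z) = ∫ z, h z * phi z * Phi (-(l * z)) := by
    rw [← integral_neg_eq_self]
    simp only [heven, phi_neg, mul_neg]
  have hsum : (∫ z, h z * phi z * Phi (l * z)) + ∫ z, h z * phi z * Phi (-(l * z))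
      = ∫ z, h z * phi z := by
    rw [← integral_add (hint' l) (by simpa only [neg_mul] using hint' (-l))]
    simp only [Phi_neg]
    ring_nf
  linarith

lemma phi_mul_phi (l z : ℝ) :
    phi z * phi (l * z) = (√(2 * π))⁻¹ * phi (√(1 + l ^ 2) * z) := by
  have hexp : -z ^ 2 / 2 + -(l * z) ^ 2 / 2 = -(√(1 + l ^ 2) * z) ^ 2 / 2 := by
    simp only [mul_pow, sq_sqrt (by positivity : (0 : ℝ) ≤ 1 + l ^ 2)]; ring
  simp only [phi]
  rw [← hexp, exp_add]
  ring

lemma integral_pow_mul_phi_const_mul {s : ℝ} (hs : 0 < s) (n : ℕ) :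
    ∫ z, z ^ n * phi (s * z) = (∫ z, z ^ n * phi z) / s ^ (n + 1) := by
  have h := Measure.integral_comp_mul_left (fun y => y ^ n * phi y) s
  simp only [mul_pow, mul_assoc, integral_const_mul, smul_eq_mul, abs_inv, abs_of_pos hs] at h
  field_simp at h ⊢
  linear_combination h

lemma integral_pow_mul_phi_mul_phi (l : ℝ) (n : ℕ) :
    ∫ z, z ^ n * phi z * phi (l * z)
      = (√(2 * π))⁻¹ * (∫ z, z ^ n * phi z) / √(1 + l ^ 2) ^ (n + 1) := by
  simp only [mul_assoc, phi_mul_phi, mul_left_comm _ (√(2 * π))⁻¹, integral_const_mul]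
  rw [integral_pow_mul_phi_const_mul (by positivity), mul_div_assoc]

lemma inv_sqrt_two_mul_pi_eq_bconst_div_two : (√(2 * π))⁻¹ = bconst / 2 := by
  have h2 : √2 ^ 2 = 2 := sq_sqrt zero_le_two
  rw [bconst, sqrt_div zero_le_two, sqrt_mul zero_le_two]
  field_simp
  linear_combination -h2

lemma hasDerivAt_Phi_const_mul (l x : ℝ) :
    HasDerivAt (fun z => Phi (l * z)) (l * phi (l * x)) x :=
  ((hasDerivAt_Phi (l * x)).comp x ((hasDerivAt_id x).const_mul l)).congr_deriv (by ring)

lemma integrable_pow_mul_phi_mul_Phi (l : ℝ) (n : ℕ) :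
    Integrable fun z => z ^ n * phi z * Phi (l * z) :=
  integrable_pow_mul_phi_mul (continuous_Phi.comp (continuous_const_mul l))
    (fun _ => abs_Phi_le_one _) n

lemma integrable_pow_mul_phi_mul_phi (l : ℝ) (n : ℕ) :
    Integrable fun z => z ^ n * phi z * phi (l * z) :=
  integrable_pow_mul_phi_mul (continuous_phi.comp (continuous_const_mul l))
    (fun _ => (abs_of_pos (phi_pos _)).trans_le (phi_le_one _)) n

lemma integral_pow_mul_phi_mul_Phi_of_even (l : ℝ) {n : ℕ} (hn : Even n) :
    ∫ z, z ^ n * phi z * Phi (l * z) = (∫ z, z ^ n * phi z) / 2 :=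
  integral_mul_phi_mul_Phi_of_even hn.neg_pow (integrable_pow_mul_phi n) l

lemma integral_mul_phi_mul_Phi (l : ℝ) :
    ∫ z, z * phi z * Phi (l * z) = bconst * del l / 2 := by
  have h := integral_mul_phi_mul_eq_integral_phi_mul_deriv (hasDerivAt_Phi_const_mul l)
    (by simpa using integrable_pow_mul_phi_mul_Phi l 1)
    (((integrable_pow_mul_phi_mul_phi l 0).const_mul l).congr (ae_of_all _ fun x => by ring))
    (by simpa using integrable_pow_mul_phi_mul_Phi l 0)
  have hJ := integral_pow_mul_phi_mul_phi l 0
  simp only [pow_zero, one_mul, zero_add, pow_one, integral_phi] at hJ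
  rw [h, del]
  simp only [mul_left_comm (phi _) l, integral_const_mul, hJ,
    inv_sqrt_two_mul_pi_eq_bconst_div_two]
  ring

lemma integral_pow_three_mul_phi_mul_Phi (l : ℝ) :
    ∫ z, z ^ 3 * phi z * Phi (l * z) = bconst * del l * (3 + 2 * l ^ 2) / (2 * (1 + l ^ 2)) := by
  have hg (x : ℝ) : HasDerivAt (fun z => z ^ 2 * Phi (l * z))
      (2 * x * Phi (l * x) + x ^ 2 * (l * phi (l * x))) x :=
    ((hasDerivAt_pow 2 x).fun_mul (hasDerivAt_Phi_const_mul l x)).congr_deriv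
      (by push_cast; ring)
  have h := integral_mul_phi_mul_eq_integral_phi_mul_deriv hg
    ((integrable_pow_mul_phi_mul_Phi l 3).congr (ae_of_all _ fun x => by ring))
    ((((integrable_pow_mul_phi_mul_Phi l 1).const_mul 2).add
      ((integrable_pow_mul_phi_mul_phi l 2).const_mul l)).congr
        (ae_of_all _ fun x => by simp only [Pi.add_apply]; ring))
    ((integrable_pow_mul_phi_mul_Phi l 2).congr (ae_of_all _ fun x => by ring))
  calc ∫ z, z ^ 3 * phi z * Phi (l * z) = ∫ x, x * phi x * (x ^ 2 * Phi (l * x)) := by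
        congr 1; ext x; ring
    _ = ∫ x, phi x * (2 * x * Phi (l * x) + x ^ 2 * (l * phi (l * x))) := h
    _ = 2 * (∫ z, z * phi z * Phi (l * z)) + l * ∫ z, z ^ 2 * phi z * phi (l * z) := by
        rw [← integral_const_mul, ← integral_const_mul, ← integral_add]
        · congr 1; ext x; ring
        · exact ((integrable_pow_mul_phi_mul_Phi l 1).const_mul 2).congr
            (ae_of_all _ fun x => by ring)
        · exact (integrable_pow_mul_phi_mul_phi l 2).const_mul l
    _ = bconst * del l * (3 + 2 * l ^ 2) / (2 * (1 + l ^ 2)) := by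
        rw [integral_mul_phi_mul_Phi, integral_pow_mul_phi_mul_phi, integral_pow_two_mul_phi,
          del, inv_sqrt_two_mul_pi_eq_bconst_div_two]
        have hs : √(1 + l ^ 2) ^ 2 = 1 + l ^ 2 := sq_sqrt (by positivity)
        set s := √(1 + l ^ 2)
        have hs0 : 0 < s := sqrt_pos.2 (by positivity)
        rw [← hs]
        field_simp
        linear_combination (2 * bconst * l * s ^ 3) * hs

theorem stmt_0 (a β l : ℝ) :
    ∫ z : ℝ, ((1 - a * z - β * z ^ 3) ^ 2 + 1) * phi z * Phi (l * z) = C a β l := by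
  have hexpand (z : ℝ) : ((1 - a * z - β * z ^ 3) ^ 2 + 1) * phi z * Phi (l * z) =
      ∑ k : Fin 7, ![2, -2 * a, a ^ 2, -2 * β, 2 * a * β, 0, β ^ 2] k *
        (z ^ (k : ℕ) * phi z * Phi (l * z)) := by
    simp only [Fin.sum_univ_seven, Matrix.cons_val, Fin.coe_ofNat_eq_mod, Nat.reduceMod]
    ring
  simp_rw [hexpand]
  rw [integral_finsetSum _ fun (k : Fin 7) _ => (integrable_pow_mul_phi_mul_Phi l k).const_mul _]
  simp only [integral_const_mul, Fin.sum_univ_seven, Matrix.cons_val, Fin.coe_ofNat_eq_mod,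
    Nat.reduceMod, pow_one]
  rw [integral_pow_mul_phi_mul_Phi_of_even l (n := 0) (by decide),
    integral_pow_mul_phi_mul_Phi_of_even l (n := 2) (by decide),
    integral_pow_mul_phi_mul_Phi_of_even l (n := 4) (by decide),
    integral_pow_mul_phi_mul_Phi_of_even l (n := 6) (by decide),
    integral_mul_phi_mul_Phi, integral_pow_three_mul_phi_mul_Phi, integral_pow_two_mul_phi,
    integral_pow_four_mul_phi, integral_pow_six_mul_phi, zero_mul]
  simp only [pow_zero, one_mul, integral_phi]
  rw [C]
  field_simp
  ring
end

section
/- For each fixed real z, as β → ±∞ (with α, λ fixed) the GABSN(α,β,λ) density converges pointwise to (2z⁶/15)·φ(z)·Φ(λz), the GBN(6) skewed density. -/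
open Real MeasureTheory Filter

theorem stmt_6 (a l : ℝ) (z : ℝ) :
    Tendsto (fun β : ℝ => f a β l z) atTop (nhds ((2 * z ^ 6 / 15) * phi z * Phi (l * z))) ∧
    Tendsto (fun β : ℝ => f a β l z) atBot (nhds ((2 * z ^ 6 / 15) * phi z * Phi (l * z))) := by
  set c : ℝ := 1 - a * z with hc
  set K0 : ℝ := 1 - a * bconst * del l + a ^ 2 / 2 with hK0
  set K1 : ℝ := 3 * a - bconst * del l * (3 + 2 * l ^ 2) / (1 + l ^ 2) with hK1
  set g : ℝ → ℝ := fun t =>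
    (((c * t - z ^ 3) ^ 2 + t ^ 2) / (K0 * t ^ 2 + K1 * t + 15 / 2)) * (phi z * Phi (l * z))
    with hg
  have hg0 : g 0 = 2 * z ^ 6 / 15 * phi z * Phi (l * z) := by
    simp only [hg]
    norm_num
    ring
  have hcont : ContinuousAt g 0 := by
    apply ContinuousAt.mul _ continuousAt_const
    apply ContinuousAt.div (by fun_prop) (by fun_prop)
    norm_num
  have heq : ∀ β : ℝ, β ≠ 0 → f a β l z = g β⁻¹ := by
    intro β hβ
    simp only [hg, f, C]
    have h1 : K0 * (β⁻¹) ^ 2 + K1 * β⁻¹ + 15 / 2 =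
        (1 + 3 * a * β - a * bconst * del l
          - β * bconst * del l * (3 + 2 * l ^ 2) / (1 + l ^ 2)
          + a ^ 2 / 2 + 15 * β ^ 2 / 2) / β ^ 2 := by
      rw [hK0, hK1]
      field_simp
      ring
    have h2 : (c * β⁻¹ - z ^ 3) ^ 2 + (β⁻¹) ^ 2 =
        ((1 - a * z - β * z ^ 3) ^ 2 + 1) / β ^ 2 := by
      rw [hc]
      field_simp
    rw [h1, h2, div_div_div_comm, div_self (pow_ne_zero 2 hβ), div_one]
    ring
  have hbase : Tendsto g (nhds 0) (nhds (2 * z ^ 6 / 15 * phi z * Phi (l * z))) :=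
    hg0 ▸ hcont.tendsto
  constructor
  · refine Tendsto.congr' ?_ (hbase.comp tendsto_inv_atTop_zero)
    filter_upwards [eventually_ne_atTop (0 : ℝ)] with β hβ using (heq β hβ).symm
  · have hinvBot : Tendsto (fun β : ℝ => β⁻¹) atBot (nhds 0) := by
      have h := (tendsto_inv_atTop_zero.comp (tendsto_neg_atBot_atTop : Tendsto (fun x : ℝ => -x) atBot atTop)).neg
      simpa [inv_neg] using h
    refine Tendsto.congr' ?_ (hbase.comp hinvBot)
    filter_upwards [eventually_ne_atBot (0 : ℝ)] with β hβ using (heq β hβ).symm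
end
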